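/- Let α_1,…,α_l be pairwise distinct points of the open unit disc 𝔻, let A_1 = λ_1 I, …, A_k = λ_k I ∈ Ω_2 be scalar matrices, let A_{k+1},…,A_l ∈ Ω_2 be non-scalar matrices, and let φ = (φ_1,φ_2) : 𝔻 → 𝔾_2 be holomorphic with φ(α_j) = σ(A_j) for j = 1,…,l. Then there exists a holomorphic map ψ : 𝔻 → Ω_2 satisfying σ∘ψ = φ and ψ(α_j) = A_j for j = 1,…,l if and only if φ_2′(α_j) = λ_j φ_1′(α_j) for j = 1,…,k. -/

import Mathlib

open Metric Matrix Polynomial Set Filter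

noncomputable section

/-- The open unit disc in `ℂ`. -/
def unitDisc : Set ℂ := Metric.ball 0 1

/-- The spectral ball `Ω_n`: matrices whose spectral radius is `< 1`, i.e. all
eigenvalues have modulus `< 1`. -/
def SpectralBall (n : ℕ) : Set (Matrix (Fin n) (Fin n) ℂ) :=
  {A | ∀ z ∈ spectrum ℂ A, ‖z‖ < 1}

/-- `σ(A) = (σ_1(A), …, σ_n(A))`, the signed coefficients of the characteristic
polynomial: `det (t•I − A) = ∑_{j=0}^n (−1)^j σ_j(A) t^(n−j)`.  Index `i : Fin n`
corresponds to `σ_{i+1}`. -/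
def sigmaCoeff (n : ℕ) (A : Matrix (Fin n) (Fin n) ℂ) : Fin n → ℂ :=
  fun i => (-1 : ℂ) ^ ((i : ℕ) + 1) * A.charpoly.coeff (n - ((i : ℕ) + 1))

/-- The symmetrized polydisc `𝔾_n = σ(Ω_n)`. -/
def SymPolydisc (n : ℕ) : Set (Fin n → ℂ) :=
  sigmaCoeff n '' SpectralBall n

/-- A matrix is scalar if it is `c • I` for some `c : ℂ`. -/
def IsScalarMatrix {n : ℕ} (A : Matrix (Fin n) (Fin n) ℂ) : Prop :=
  ∃ c : ℂ, A = c • (1 : Matrix (Fin n) (Fin n) ℂ)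

/-- A matrix is cyclic (non-derogatory) if it admits a cyclic vector `v`, i.e.
`v, A v, …, A^(n−1) v` span `ℂ^n`. -/
def IsCyclicMatrix {n : ℕ} (A : Matrix (Fin n) (Fin n) ℂ) : Prop :=
  ∃ v : Fin n → ℂ,
    Submodule.span ℂ (Set.range fun i : Fin n => (A ^ (i : ℕ)).mulVec v) = ⊤

/-- A matrix-valued map is holomorphic on the unit disc if each entry is. -/
def MatHolo {n : ℕ} (ψ : ℂ → Matrix (Fin n) (Fin n) ℂ) : Prop :=
  ∀ i j : Fin n, DifferentiableOn ℂ (fun z => ψ z i j) unitDisc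

/-- A matrix-valued map is bounded on the unit disc. -/
def MatBounded {n : ℕ} (ψ : ℂ → Matrix (Fin n) (Fin n) ℂ) : Prop :=
  ∃ C : ℝ, ∀ z ∈ unitDisc, ∀ i j : Fin n, ‖ψ z i j‖ ≤ C

/-- The spectral radius of a matrix. -/
def specRad (n : ℕ) (A : Matrix (Fin n) (Fin n) ℂ) : ℝ :=
  sSup ((fun z => ‖z‖) '' spectrum ℂ A)

/-- The Lempert function of the spectral ball `Ω_n`. -/
def lempertOmega (n : ℕ) (A B : Matrix (Fin n) (Fin n) ℂ) : ℝ :=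
  sInf {r : ℝ | ∃ α : ℂ, α ∈ unitDisc ∧ ‖α‖ = r ∧
    ∃ ψ : ℂ → Matrix (Fin n) (Fin n) ℂ, MatHolo ψ ∧
      Set.MapsTo ψ unitDisc (SpectralBall n) ∧ ψ 0 = A ∧ ψ α = B}

/-- The Kobayashi–Royden pseudometric of the spectral ball `Ω_n`. -/
def kobayashiOmega (n : ℕ) (A B : Matrix (Fin n) (Fin n) ℂ) : ℝ :=
  sInf {γ : ℝ | 0 ≤ γ ∧ ∃ ψ : ℂ → Matrix (Fin n) (Fin n) ℂ, MatHolo ψ ∧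
    Set.MapsTo ψ unitDisc (SpectralBall n) ∧ ψ 0 = A ∧
    ∀ i j : Fin n, (γ : ℂ) * deriv (fun z => ψ z i j) 0 = B i j}

/-!
Necessity: at a scalar node `ψ (α j) = λ • 1`, and the derivative of `det` at `λ • 1` is
`λ • trace`, so differentiating `det ψ = φ₂`, `trace ψ = φ₁` gives `φ₂' = λ φ₁'`.

Sufficiency: the condition says that the discriminant `(φ₁/2)² - φ₂` vanishes to second order at
the scalar nodes, so it equals `u * P` with `P = ∏ (z - α j)` over the scalar nodes and `u`
holomorphic and vanishing there. Then `ψ₀ = !![φ₁/2, u; P, φ₁/2]` lifts `φ`, equals `λ j • 1` at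
the scalar nodes and is non-scalar elsewhere, so at each non-scalar node it is conjugate to `A j`
(non-scalar `2 × 2` matrices with equal trace and determinant are similar). Conjugating `ψ₀` by a
holomorphic `GL₂`-valued map interpolating these conjugators gives the lift; such a map exists
because every invertible `2 × 2` matrix is a product of upper, lower, upper unitriangular and
diagonal matrices `!![exp x, 0; 0, exp y]`, whose parameters can be interpolated by polynomials.
Conjugation preserves `σ`, and `σ` determines the spectrum, so the lift maps into `Ω₂`.
-/

open scoped Topology

theorem sigmaCoeff_fin_two (M : Matrix (Fin 2) (Fin 2) ℂ) :
    sigmaCoeff 2 M = ![M.trace, M.det] := by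
  funext i
  fin_cases i <;> simp [sigmaCoeff, charpoly_fin_two, coeff_X, coeff_C]

theorem charpoly_eq_of_sigmaCoeff_eq {n : ℕ} {A B : Matrix (Fin n) (Fin n) ℂ}
    (h : sigmaCoeff n A = sigmaCoeff n B) : A.charpoly = B.charpoly := by
  ext m
  rcases lt_trichotomy m n with hm | rfl | hm
  · have := congrFun h ⟨n - 1 - m, by omega⟩
    simp only [sigmaCoeff, show n - (n - 1 - m + 1) = m by omega] at this
    exact mul_left_cancel₀ (pow_ne_zero _ (neg_ne_zero.2 one_ne_zero)) this
  · simpa using (A.charpoly_monic.coeff_natDegree).trans B.charpoly_monic.coeff_natDegree.symm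
  · rw [coeff_eq_zero_of_natDegree_lt (by simpa using hm),
      coeff_eq_zero_of_natDegree_lt (by simpa using hm)]

theorem spectrum_eq_of_sigmaCoeff_eq {n : ℕ} {A B : Matrix (Fin n) (Fin n) ℂ}
    (h : sigmaCoeff n A = sigmaCoeff n B) : spectrum ℂ A = spectrum ℂ B := by
  ext z
  simp only [Matrix.mem_spectrum_iff_isRoot_charpoly, charpoly_eq_of_sigmaCoeff_eq h]

theorem mem_spectralBall_of_sigmaCoeff_mem {n : ℕ} {A : Matrix (Fin n) (Fin n) ℂ}
    (h : sigmaCoeff n A ∈ SymPolydisc n) : A ∈ SpectralBall n := by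
  obtain ⟨B, hB, hBA⟩ := h
  exact fun z hz => hB z (by rwa [spectrum_eq_of_sigmaCoeff_eq hBA])

theorem sigmaCoeff_units_conj {n : ℕ} (P : (Matrix (Fin n) (Fin n) ℂ)ˣ)
    (A : Matrix (Fin n) (Fin n) ℂ) : sigmaCoeff n (P.val * A * P⁻¹.val) = sigmaCoeff n A := by
  unfold sigmaCoeff
  rw [coe_units_inv, charpoly_units_conj]

theorem sigmaCoeff_smul_one (c : ℂ) : sigmaCoeff 2 (c • 1) = ![2 * c, c ^ 2] := by
  rw [sigmaCoeff_fin_two]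
  simp [sq]
  ring

theorem not_isScalarMatrix_of_apply_one_zero_ne_zero {M : Matrix (Fin 2) (Fin 2) ℂ}
    (h : M 1 0 ≠ 0) : ¬ IsScalarMatrix M := by
  rintro ⟨c, rfl⟩
  simp at h

theorem exists_units_mul_companion {M : Matrix (Fin 2) (Fin 2) ℂ} (h : ¬ IsScalarMatrix M) :
    ∃ P : (Matrix (Fin 2) (Fin 2) ℂ)ˣ, M * P = P * !![0, -M.det; 1, M.trace] := by
  suffices ∃ P : Matrix (Fin 2) (Fin 2) ℂ, P.det ≠ 0 ∧ M * P = P * !![0, -M.det; 1, M.trace] by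
    obtain ⟨P, hP, hMP⟩ := this
    exact ⟨(P.isUnit_iff_isUnit_det.2 (isUnit_iff_ne_zero.2 hP)).unit, hMP⟩
  by_cases hc : M 1 0 ≠ 0
  · refine ⟨!![1, M 0 0; 0, M 1 0], by simpa [det_fin_two_of] using hc, ?_⟩
    ext i j
    fin_cases i <;> fin_cases j <;>
      simp [mul_apply, Fin.sum_univ_two, det_fin_two, trace_fin_two] <;> ring
  by_cases hb : M 0 1 ≠ 0
  · refine ⟨!![0, M 0 1; 1, M 1 1], by simpa [det_fin_two_of] using hb, ?_⟩
    ext i j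
    fin_cases i <;> fin_cases j <;>
      simp [mul_apply, Fin.sum_univ_two, det_fin_two, trace_fin_two] <;> ring
  push Not at hb hc
  have hd : M 1 1 - M 0 0 ≠ 0 := fun he =>
    h ⟨M 0 0, by ext i j; fin_cases i <;> fin_cases j <;> simp [hb, hc, sub_eq_zero.1 he]⟩
  refine ⟨!![1, M 0 0; 1, M 1 1], by simpa [det_fin_two_of] using hd, ?_⟩
  ext i j
  fin_cases i <;> fin_cases j <;>
    simp [mul_apply, Fin.sum_univ_two, det_fin_two, trace_fin_two, hb, hc] <;> ring

theorem exists_units_conj_of_not_isScalarMatrix {M N : Matrix (Fin 2) (Fin 2) ℂ}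
    (hM : ¬ IsScalarMatrix M) (hN : ¬ IsScalarMatrix N) (hσ : sigmaCoeff 2 M = sigmaCoeff 2 N) :
    ∃ G : (Matrix (Fin 2) (Fin 2) ℂ)ˣ, M = G.val * N * G⁻¹.val := by
  simp only [sigmaCoeff_fin_two, vecCons_inj, and_true] at hσ
  obtain ⟨htr, hdet⟩ := hσ
  obtain ⟨P, hP⟩ := exists_units_mul_companion hM
  obtain ⟨R, hR⟩ := exists_units_mul_companion hN
  rw [← htr, ← hdet] at hR
  refine ⟨P * R⁻¹, ?_⟩
  have hR' : !![0, -M.det; 1, M.trace] * R⁻¹.val = R⁻¹.val * N := by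
    rw [← Units.inv_mul_cancel_left R (_ * _), ← mul_assoc R.val, ← hR,
      Units.mul_inv_cancel_right]
  rw [Units.eq_mul_inv_iff_mul_eq, Units.val_mul, ← mul_assoc, hP, mul_assoc, hR', mul_assoc]

theorem MatHolo.mul {n : ℕ} {f g : ℂ → Matrix (Fin n) (Fin n) ℂ} (hf : MatHolo f)
    (hg : MatHolo g) : MatHolo (fun z => f z * g z) := fun i j => by
  simp only [mul_apply]
  exact DifferentiableOn.fun_sum fun k _ => (hf i k).mul (hg k j)

theorem matHolo_of_fin_two {f₀₀ f₀₁ f₁₀ f₁₁ : ℂ → ℂ}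
    (h₀₀ : DifferentiableOn ℂ f₀₀ unitDisc) (h₀₁ : DifferentiableOn ℂ f₀₁ unitDisc)
    (h₁₀ : DifferentiableOn ℂ f₁₀ unitDisc) (h₁₁ : DifferentiableOn ℂ f₁₁ unitDisc) :
    MatHolo (fun z => !![f₀₀ z, f₀₁ z; f₁₀ z, f₁₁ z]) := by
  intro i j
  fin_cases i <;> fin_cases j <;> simpa

theorem exists_differentiable_interpolate {ι : Type*} [Fintype ι] {α : ι → ℂ}
    (hα : Function.Injective α) (v : ι → ℂ) :
    ∃ f : ℂ → ℂ, Differentiable ℂ f ∧ ∀ j, f (α j) = v j := by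
  classical
  exact ⟨fun z => (Lagrange.interpolate Finset.univ α v).eval z, Polynomial.differentiable _,
    fun j => Lagrange.eval_interpolate_at_node v hα.injOn (Finset.mem_univ j)⟩

@[simps]
def upperUnit (a : ℂ) : (Matrix (Fin 2) (Fin 2) ℂ)ˣ where
  val := !![1, a; 0, 1]
  inv := !![1, -a; 0, 1]
  val_inv := by simp [one_fin_two]
  inv_val := by simp [one_fin_two]

@[simps]
def lowerUnit (b : ℂ) : (Matrix (Fin 2) (Fin 2) ℂ)ˣ where
  val := !![1, 0; b, 1]
  inv := !![1, 0; -b, 1]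
  val_inv := by simp [one_fin_two]
  inv_val := by simp [one_fin_two]

@[simps]
def diagExpUnit (x y : ℂ) : (Matrix (Fin 2) (Fin 2) ℂ)ˣ where
  val := !![Complex.exp x, 0; 0, Complex.exp y]
  inv := !![Complex.exp (-x), 0; 0, Complex.exp (-y)]
  val_inv := by simp [one_fin_two, ← Complex.exp_add]
  inv_val := by simp [one_fin_two, ← Complex.exp_add]

theorem exists_eq_upperUnit_mul_lowerUnit_mul_upperUnit_mul_diagExpUnit
    (G : (Matrix (Fin 2) (Fin 2) ℂ)ˣ) :
    ∃ a b c x y : ℂ, G = upperUnit a * lowerUnit b * upperUnit c * diagExpUnit x y := by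
  suffices ∃ a b c d e : ℂ, d ≠ 0 ∧ e ≠ 0 ∧
      G.val = !![1, a; 0, 1] * !![1, 0; b, 1] * !![1, c; 0, 1] * !![d, 0; 0, e] by
    obtain ⟨a, b, c, d, e, hd, he, hG⟩ := this
    refine ⟨a, b, c, Complex.log d, Complex.log e, Units.ext ?_⟩
    simp only [Units.val_mul, val_upperUnit, val_lowerUnit, val_diagExpUnit, Complex.exp_log hd,
      Complex.exp_log he, hG]
  have hdet := ((Matrix.isUnit_iff_isUnit_det _).1 G.isUnit).ne_zero
  rw [eta_fin_two G.val, det_fin_two_of] at *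
  generalize G.val 0 0 = p, G.val 0 1 = q, G.val 1 0 = r, G.val 1 1 = s at *
  simp only [mul_fin_two, EmbeddingLike.apply_eq_iff_eq, vecCons_inj, and_true, mul_one, one_mul,
    mul_zero, add_zero, zero_add]
  by_cases hr : r = 0
  · subst hr
    have hp : p ≠ 0 := by rintro rfl; simp at hdet
    have hs : s ≠ 0 := by rintro rfl; simp at hdet
    exact ⟨q / s, 0, 0, p, s, hp, hs, ⟨by simp, by field_simp; ring⟩, by simp, by simp⟩
  · have hdet' : s * p - r * q ≠ 0 := by rwa [mul_comm s, mul_comm r]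
    refine ⟨p / r - 1, 1, s * r / (p * s - q * r) - 1, r, (p * s - q * r) / r, hr,
      div_ne_zero hdet hr, ⟨?_, ?_⟩, ?_, ?_⟩ <;> field_simp <;> ring

theorem exists_units_interpolate {ι : Type*} [Fintype ι] {α : ι → ℂ}
    (hα : Function.Injective α) (G : ι → (Matrix (Fin 2) (Fin 2) ℂ)ˣ) :
    ∃ Q : ℂ → (Matrix (Fin 2) (Fin 2) ℂ)ˣ, MatHolo (fun z => (Q z).val) ∧
      MatHolo (fun z => (Q z)⁻¹.val) ∧ ∀ j, Q (α j) = G j := by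
  choose a b c x y hG using fun j =>
    exists_eq_upperUnit_mul_lowerUnit_mul_upperUnit_mul_diagExpUnit (G j)
  obtain ⟨fa, hfa, hfaα⟩ := exists_differentiable_interpolate hα a
  obtain ⟨fb, hfb, hfbα⟩ := exists_differentiable_interpolate hα b
  obtain ⟨fc, hfc, hfcα⟩ := exists_differentiable_interpolate hα c
  obtain ⟨fx, hfx, hfxα⟩ := exists_differentiable_interpolate hα x
  obtain ⟨fy, hfy, hfyα⟩ := exists_differentiable_interpolate hα y
  refine ⟨fun z => upperUnit (fa z) * lowerUnit (fb z) * upperUnit (fc z) *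
    diagExpUnit (fx z) (fy z), ?_, ?_, fun j => by simp only [hfaα, hfbα, hfcα, hfxα, hfyα, hG]⟩
  all_goals simp only [Units.val_mul, _root_.mul_inv_rev, val_upperUnit, val_inv_upperUnit,
      val_lowerUnit, val_inv_lowerUnit, val_diagExpUnit, val_inv_diagExpUnit]
  · refine .mul (.mul (.mul ?_ ?_) ?_) ?_ <;> apply matHolo_of_fin_two <;> fun_prop
  · refine .mul ?_ (.mul ?_ (.mul ?_ ?_)) <;> apply matHolo_of_fin_two <;> fun_prop

theorem exists_eq_mul_prod_sub_of_deriv_eq_zero {U : Set ℂ} (hU : IsOpen U) {F : ℂ → ℂ}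
    (hF : DifferentiableOn ℂ F U) (S : Finset ℂ) (hSU : ↑S ⊆ U) (hF₀ : ∀ a ∈ S, F a = 0)
    (hF₁ : ∀ a ∈ S, deriv F a = 0) :
    ∃ u : ℂ → ℂ, DifferentiableOn ℂ u U ∧ (∀ z, F z = u z * ∏ a ∈ S, (z - a)) ∧
      ∀ a ∈ S, u a = 0 := by
  induction S using Finset.induction_on with
  | empty => exact ⟨F, hF, by simp, by simp⟩
  | @insert a S ha ih =>
    simp only [Finset.coe_insert, Set.insert_subset_iff, Finset.mem_insert, forall_eq_or_imp]
      at hSU hF₀ hF₁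
    obtain ⟨u, hu, hFu, hu₀⟩ := ih hSU.2 hF₀.2 hF₁.2
    have hPa : ∏ b ∈ S, (a - b) ≠ 0 :=
      Finset.prod_ne_zero_iff.2 fun b hb => sub_ne_zero.2 (ne_of_mem_of_not_mem hb ha).symm
    have hua : u a = 0 := by
      simpa [hPa] using (hFu a).symm.trans hF₀.1
    have hu'a : deriv u a = 0 := by
      have hFeq : F = fun z => u z * ∏ b ∈ S, (z - b) := funext hFu
      have := hF₁.1
      rw [hFeq, deriv_fun_mul (hu.differentiableAt (hU.mem_nhds hSU.1)) (by fun_prop), hua,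
        zero_mul, add_zero] at this
      exact (mul_eq_zero.1 this).resolve_right hPa
    refine ⟨dslope u a, (Complex.differentiableOn_dslope (hU.mem_nhds hSU.1)).2 hu,
      fun z => ?_, ?_⟩
    · rw [Finset.prod_insert ha, ← mul_assoc, mul_comm _ (z - a), ← smul_eq_mul (z - a),
        sub_smul_dslope, hua, sub_zero, hFu]
    · refine Finset.forall_mem_insert _ _ _ |>.2 ⟨by rwa [dslope_same], fun b hb => ?_⟩
      rw [dslope_of_ne _ (ne_of_mem_of_not_mem hb ha), slope_def_field, hu₀ b hb, hua]
      simp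

theorem deriv_det_eq_mul_deriv_trace {ψ : ℂ → Matrix (Fin 2) (Fin 2) ℂ} {a c : ℂ}
    (hψ : ∀ i j, DifferentiableAt ℂ (fun z => ψ z i j) a) (hc : ψ a = c • 1) :
    deriv (fun z => (ψ z).det) a = c * deriv (fun z => (ψ z).trace) a := by
  simp only [det_fin_two, trace_fin_two]
  rw [deriv_fun_sub ((hψ 0 0).fun_mul (hψ 1 1)) ((hψ 0 1).fun_mul (hψ 1 0)),
    deriv_fun_mul (hψ 0 0) (hψ 1 1), deriv_fun_mul (hψ 0 1) (hψ 1 0),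
    deriv_fun_add (hψ 0 0) (hψ 1 1)]
  simp [hc]
  ring

theorem deriv_snd_eq_mul_deriv_fst_of_sigmaCoeff_eq {φ : ℂ → Fin 2 → ℂ}
    {ψ : ℂ → Matrix (Fin 2) (Fin 2) ℂ} (hψ : MatHolo ψ)
    (hσ : ∀ z ∈ unitDisc, sigmaCoeff 2 (ψ z) = φ z) {a c : ℂ} (ha : a ∈ unitDisc)
    (hc : ψ a = c • 1) :
    deriv (fun z => φ z 1) a = c * deriv (fun z => φ z 0) a := by
  have hnhds : unitDisc ∈ 𝓝 a := isOpen_ball.mem_nhds ha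
  have hσa : ∀ᶠ z in 𝓝 a, φ z = ![(ψ z).trace, (ψ z).det] :=
    Filter.eventually_of_mem hnhds fun z hz => by rw [← hσ z hz, sigmaCoeff_fin_two]
  have h₀ : (fun z => φ z 0) =ᶠ[𝓝 a] fun z => (ψ z).trace := hσa.mono fun z hz => by simp [hz]
  have h₁ : (fun z => φ z 1) =ᶠ[𝓝 a] fun z => (ψ z).det := hσa.mono fun z hz => by simp [hz]
  rw [h₀.deriv_eq, h₁.deriv_eq]
  exact deriv_det_eq_mul_deriv_trace (fun i j => (hψ i j).differentiableAt hnhds) hc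

theorem exists_matHolo_sigmaCoeff_eq {φ : ℂ → Fin 2 → ℂ} (hφ : DifferentiableOn ℂ φ unitDisc)
    (S : Finset ℂ) (hS : ↑S ⊆ unitDisc) (hφ₀ : ∀ a ∈ S, φ a 1 = (φ a 0 / 2) ^ 2)
    (hφ₁ : ∀ a ∈ S, deriv (fun z => φ z 1) a = φ a 0 / 2 * deriv (fun z => φ z 0) a) :
    ∃ ψ : ℂ → Matrix (Fin 2) (Fin 2) ℂ, MatHolo ψ ∧ (∀ z, sigmaCoeff 2 (ψ z) = φ z) ∧
      (∀ a ∈ S, ψ a = (φ a 0 / 2) • 1) ∧ ∀ z ∉ S, ¬ IsScalarMatrix (ψ z) := by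
  have hs : DifferentiableOn ℂ (fun z => φ z 0) unitDisc := differentiableOn_pi.1 hφ 0
  have hp : DifferentiableOn ℂ (fun z => φ z 1) unitDisc := differentiableOn_pi.1 hφ 1
  obtain ⟨u, hu, hFu, hu₀⟩ := exists_eq_mul_prod_sub_of_deriv_eq_zero isOpen_ball
    (F := fun z => (φ z 0 / 2) ^ 2 - φ z 1)
    (((hs.div_const 2).pow 2).sub hp) S hS (fun a ha => by simp [hφ₀ a ha]) fun a ha => by
      have hsa := hs.differentiableAt (isOpen_ball.mem_nhds (hS ha))
      rw [deriv_fun_sub ((hsa.div_const 2).fun_pow 2) (hp.differentiableAt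
        (isOpen_ball.mem_nhds (hS ha))), deriv_fun_pow (hsa.div_const 2), deriv_div_const,
        hφ₁ a ha]
      ring
  refine ⟨fun z => !![φ z 0 / 2, u z; ∏ a ∈ S, (z - a), φ z 0 / 2],
    matHolo_of_fin_two (hs.div_const 2) hu (by fun_prop) (hs.div_const 2), fun z => ?_,
    fun a ha => ?_, fun z hz => not_isScalarMatrix_of_apply_one_zero_ne_zero ?_⟩
  · rw [sigmaCoeff_fin_two, trace_fin_two_of, det_fin_two_of]
    ext i
    fin_cases i
    · simp
    · simp only [Fin.mk_one, cons_val_one, cons_val_zero]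
      linear_combination hFu z
  · ext i j
    fin_cases i <;> fin_cases j <;> simp [hu₀ a ha, Finset.prod_eq_zero ha (sub_self a)]
  · simpa [Finset.prod_ne_zero_iff, sub_eq_zero] using fun a ha (h : z = a) => hz (h ▸ ha)

theorem exists_units_conj_interpolate {ι : Type*} [Fintype ι] {α : ι → ℂ}
    (hα : Function.Injective α) {ψ : ℂ → Matrix (Fin 2) (Fin 2) ℂ} (hψ : MatHolo ψ)
    {A : ι → Matrix (Fin 2) (Fin 2) ℂ}
    (hA : ∀ j, ∃ G : (Matrix (Fin 2) (Fin 2) ℂ)ˣ, A j = G.val * ψ (α j) * G⁻¹.val) :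
    ∃ Q : ℂ → (Matrix (Fin 2) (Fin 2) ℂ)ˣ, MatHolo (fun z => (Q z).val * ψ z * (Q z)⁻¹.val) ∧
      ∀ j, (Q (α j)).val * ψ (α j) * (Q (α j))⁻¹.val = A j := by
  choose G hG using hA
  obtain ⟨Q, hQ, hQinv, hQα⟩ := exists_units_interpolate hα G
  exact ⟨Q, (hQ.mul hψ).mul hQinv, fun j => by rw [hQα, hG]⟩

theorem stmt_0_general (k l : ℕ)
    (α : Fin l → ℂ) (hαinj : Function.Injective α) (hαD : ∀ j, α j ∈ unitDisc)
    (A : Fin l → Matrix (Fin 2) (Fin 2) ℂ) (lam : Fin l → ℂ)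
    (hscal : ∀ j : Fin l, (j : ℕ) < k → A j = lam j • (1 : Matrix (Fin 2) (Fin 2) ℂ))
    (hnonscal : ∀ j : Fin l, k ≤ (j : ℕ) → ¬ IsScalarMatrix (A j))
    (φ : ℂ → Fin 2 → ℂ) (hφ : DifferentiableOn ℂ φ unitDisc)
    (hφmaps : Set.MapsTo φ unitDisc (SymPolydisc 2))
    (hφα : ∀ j, φ (α j) = sigmaCoeff 2 (A j)) :
    (∃ ψ : ℂ → Matrix (Fin 2) (Fin 2) ℂ, MatHolo ψ ∧
        Set.MapsTo ψ unitDisc (SpectralBall 2) ∧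
        (∀ z ∈ unitDisc, sigmaCoeff 2 (ψ z) = φ z) ∧
        (∀ j, ψ (α j) = A j)) ↔
      (∀ j : Fin l, (j : ℕ) < k →
        deriv (fun z => φ z 1) (α j) = lam j * deriv (fun z => φ z 0) (α j)) := by
  refine ⟨fun ⟨ψ, hψ, _, hσ, hψα⟩ j hj => deriv_snd_eq_mul_deriv_fst_of_sigmaCoeff_eq hψ hσ
    (hαD j) ((hψα j).trans (hscal j hj)), fun hder => ?_⟩
  have hφscal : ∀ j : Fin l, (j : ℕ) < k → φ (α j) = ![2 * lam j, lam j ^ 2] := fun j hj => by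
    rw [hφα, hscal j hj, sigmaCoeff_smul_one]
  set S := (Finset.univ.filter fun j : Fin l => (j : ℕ) < k).image α
  have hmemS : ∀ j, α j ∈ S ↔ (j : ℕ) < k := fun j => by simp [S, hαinj.eq_iff]
  obtain ⟨ψ₀, hψ₀, hσψ₀, hψ₀S, hψ₀nonscal⟩ := exists_matHolo_sigmaCoeff_eq hφ S
    (by simpa [S, Set.subset_def] using fun j _ => hαD j)
    (by simpa [S] using fun j hj => by simp [hφscal j hj])
    (by simpa [S] using fun j hj => by simp [hφscal j hj, hder j hj])
  have hconj : ∀ j, ∃ G : (Matrix (Fin 2) (Fin 2) ℂ)ˣ, A j = G.val * ψ₀ (α j) * G⁻¹.val := by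
    intro j
    by_cases hj : (j : ℕ) < k
    · exact ⟨1, by simp [hψ₀S _ ((hmemS j).2 hj), hφscal j hj, hscal j hj]⟩
    · exact exists_units_conj_of_not_isScalarMatrix (hnonscal j (not_lt.1 hj))
        (hψ₀nonscal _ (mt (hmemS j).1 hj)) (by rw [← hφα, hσψ₀])
  obtain ⟨Q, hQ, hQα⟩ := exists_units_conj_interpolate hαinj hψ₀ hconj
  have hσ : ∀ z, sigmaCoeff 2 ((Q z).val * ψ₀ z * (Q z)⁻¹.val) = φ z := fun z => by
    rw [sigmaCoeff_units_conj, hσψ₀]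
  exact ⟨_, hQ, fun z hz => mem_spectralBall_of_sigmaCoeff_mem (hσ z ▸ hφmaps hz),
    fun z _ => hσ z, hQα⟩

/-- Proposition 1: reduction of the spectral Nevanlinna–Pick
problem from `Ω_2` to the symmetrized bidisc `𝔾_2`. -/
theorem stmt_0 (k l : ℕ) (hkl : k ≤ l)
    (α : Fin l → ℂ) (hαinj : Function.Injective α) (hαD : ∀ j, α j ∈ unitDisc)
    (A : Fin l → Matrix (Fin 2) (Fin 2) ℂ) (lam : Fin l → ℂ)
    (hA : ∀ j, A j ∈ SpectralBall 2)
    (hscal : ∀ j : Fin l, (j : ℕ) < k → A j = lam j • (1 : Matrix (Fin 2) (Fin 2) ℂ))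
    (hnonscal : ∀ j : Fin l, k ≤ (j : ℕ) → ¬ IsScalarMatrix (A j))
    (φ : ℂ → Fin 2 → ℂ) (hφ : DifferentiableOn ℂ φ unitDisc)
    (hφmaps : Set.MapsTo φ unitDisc (SymPolydisc 2))
    (hφα : ∀ j, φ (α j) = sigmaCoeff 2 (A j)) :
    (∃ ψ : ℂ → Matrix (Fin 2) (Fin 2) ℂ, MatHolo ψ ∧
        Set.MapsTo ψ unitDisc (SpectralBall 2) ∧
        (∀ z ∈ unitDisc, sigmaCoeff 2 (ψ z) = φ z) ∧
        (∀ j, ψ (α j) = A j)) ↔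
      (∀ j : Fin l, (j : ℕ) < k →
        deriv (fun z => φ z 1) (α j) = lam j * deriv (fun z => φ z 0) (α j)) :=
  stmt_0_general k l α hαinj hαD A lam hscal hnonscal φ hφ hφmaps hφα
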